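/- An atomic amalgam of Kleene lattices is a paraorthomodular lattice if and only if it contains no atomic loop of order 3 or 4. -/

import Mathlib

/-- A pasted family of finite Kleene lattices over a common carrier `K`,
indexed by `ι`.  Each block `blk i` carries a bounded distributive lattice
structure `(le i, inf i, sup i, bot, top)` with an antitone involution `compl`
which is paraorthomodular and regular (i.e. each block is a Kleene lattice)
and has at least 6 elements.  Any two distinct blocks intersect either in
`{bot, top}` or in a common atomic Kleene subalgebra of at most 4 elements on
which the operations coincide and whose elements other than `bot`, `top` are
simultaneously atoms or simultaneously coatoms of both blocks. -/
structure PastedFamily (K : Type*) (ι : Type*) where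
  blk : ι → Set K
  cover : ∀ x : K, ∃ i, x ∈ blk i
  le : ι → K → K → Prop
  inf : ι → K → K → K
  sup : ι → K → K → K
  compl : K → K
  bot : K
  top : K
  bot_mem : ∀ i, bot ∈ blk i
  top_mem : ∀ i, top ∈ blk i
  finite : ∀ i, (blk i).Finite
  card6 : ∀ i, 6 ≤ (blk i).ncard
  le_refl : ∀ i x, x ∈ blk i → le i x x
  le_antisymm' : ∀ i x y, le i x y → le i y x → x = y
  le_trans' : ∀ i x y z, le i x y → le i y z → le i x z
  bot_le : ∀ i x, x ∈ blk i → le i bot x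
  le_top : ∀ i x, x ∈ blk i → le i x top
  inf_mem : ∀ i x y, x ∈ blk i → y ∈ blk i → inf i x y ∈ blk i
  sup_mem : ∀ i x y, x ∈ blk i → y ∈ blk i → sup i x y ∈ blk i
  inf_le_left : ∀ i x y, x ∈ blk i → y ∈ blk i → le i (inf i x y) x
  inf_le_right : ∀ i x y, x ∈ blk i → y ∈ blk i → le i (inf i x y) y
  le_inf : ∀ i x y z, x ∈ blk i → y ∈ blk i → z ∈ blk i →
    le i z x → le i z y → le i z (inf i x y)
  le_sup_left : ∀ i x y, x ∈ blk i → y ∈ blk i → le i x (sup i x y)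
  le_sup_right : ∀ i x y, x ∈ blk i → y ∈ blk i → le i y (sup i x y)
  sup_le : ∀ i x y z, x ∈ blk i → y ∈ blk i → z ∈ blk i →
    le i x z → le i y z → le i (sup i x y) z
  distrib : ∀ i x y z, x ∈ blk i → y ∈ blk i → z ∈ blk i →
    inf i x (sup i y z) = sup i (inf i x y) (inf i x z)
  compl_mem : ∀ i x, x ∈ blk i → compl x ∈ blk i
  compl_antitone : ∀ i x y, x ∈ blk i → y ∈ blk i → le i x y →
    le i (compl y) (compl x)
  compl_invol : ∀ x, compl (compl x) = x
  /-- Each block is paraorthomodular. -/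
  blockParaOM : ∀ i x y, x ∈ blk i → y ∈ blk i → le i x y →
    inf i (compl x) y = bot → x = y
  /-- Each block is regular (Kleene condition). -/
  regular : ∀ i x y, x ∈ blk i → y ∈ blk i →
    le i (inf i x (compl x)) (sup i y (compl y))
  /-- The block orders agree on intersections of blocks. -/
  le_compat : ∀ i j x y, x ∈ blk i → y ∈ blk i → x ∈ blk j → y ∈ blk j →
    le i x y → le j x y
  /-- Pasting condition on the intersection of two distinct blocks. -/
  inter : ∀ i j, i ≠ j → blk i ∩ blk j = {bot, top} ∨
    ((blk i ∩ blk j).ncard ≤ 4 ∧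
     bot ∈ blk i ∩ blk j ∧ top ∈ blk i ∩ blk j ∧
     (∀ x ∈ blk i ∩ blk j, compl x ∈ blk i ∩ blk j) ∧
     (∀ x y, x ∈ blk i ∩ blk j → y ∈ blk i ∩ blk j →
       inf i x y = inf j x y ∧ inf i x y ∈ blk i ∩ blk j ∧
       sup i x y = sup j x y ∧ sup i x y ∈ blk i ∩ blk j) ∧
     (∀ x ∈ blk i ∩ blk j, x ≠ bot → x ≠ top →
       ((x ≠ bot ∧ ∀ z ∈ blk i, le i z x → z = bot ∨ z = x) ∧
        (x ≠ bot ∧ ∀ z ∈ blk j, le j z x → z = bot ∨ z = x)) ∨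
       ((x ≠ top ∧ ∀ z ∈ blk i, le i x z → z = top ∨ z = x) ∧
        (x ≠ top ∧ ∀ z ∈ blk j, le j x z → z = top ∨ z = x))))

namespace PastedFamily

variable {K ι : Type*} (A : PastedFamily K ι)

/-- The order of the atomic amalgam: `x ≤ y` iff `x ≤ y` in some block. -/
def gle (x y : K) : Prop := ∃ i, x ∈ A.blk i ∧ y ∈ A.blk i ∧ A.le i x y

/-- `s` is the least upper bound of `x` and `y` in the amalgam. -/
def IsLubA (x y s : K) : Prop :=
  A.gle x s ∧ A.gle y s ∧ ∀ z, A.gle x z → A.gle y z → A.gle s z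

/-- `m` is the greatest lower bound of `x` and `y` in the amalgam. -/
def IsGlbA (x y m : K) : Prop :=
  A.gle m x ∧ A.gle m y ∧ ∀ z, A.gle z x → A.gle z y → A.gle z m

/-- Paraorthomodularity of the amalgam: `x ≤ y` and `x' ∧ y = 0`
(i.e. the lower cone `L(x', y)` is `{0}`) imply `x = y`. -/
def ParaOM : Prop := ∀ x y, A.gle x y →
  (∀ z, A.gle z (A.compl x) → A.gle z y → z = A.bot) → x = y

/-- Blocks `i, j, k` form an atomic loop of order 3: consecutive (cyclic)
intersections have exactly 4 elements and the triple intersection is `{0,1}`. -/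
def AtomicLoop3 (i j k : ι) : Prop :=
  (A.blk i ∩ A.blk j).ncard = 4 ∧ (A.blk j ∩ A.blk k).ncard = 4 ∧
  (A.blk k ∩ A.blk i).ncard = 4 ∧
  A.blk i ∩ A.blk j ∩ A.blk k = {A.bot, A.top}

/-- Blocks `i, j, k, l` form an atomic loop of order 4. -/
def AtomicLoop4 (i j k l : ι) : Prop :=
  (A.blk i ∩ A.blk j).ncard = 4 ∧ (A.blk j ∩ A.blk k).ncard = 4 ∧
  (A.blk k ∩ A.blk l).ncard = 4 ∧ (A.blk l ∩ A.blk i).ncard = 4 ∧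
  A.blk i ∩ A.blk k = {A.bot, A.top} ∧ A.blk j ∩ A.blk l = {A.bot, A.top} ∧
  A.blk i ∩ A.blk j ∩ A.blk k = {A.bot, A.top} ∧
  A.blk i ∩ A.blk j ∩ A.blk l = {A.bot, A.top} ∧
  A.blk i ∩ A.blk k ∩ A.blk l = {A.bot, A.top} ∧
  A.blk j ∩ A.blk k ∩ A.blk l = {A.bot, A.top}

end PastedFamily

/-!
Paraorthomodularity comes for free: if `x ≤ y` in a block, the block meet `x' ∧ y` is a lower
bound of `x'` and `y`, hence `0`, and the block itself is paraorthomodular. Meets are complements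
of joins of complements, so only joins matter.

In a Kleene lattice every atom `p` lies below `z` or below `z'`. Hence two distinct blocks sharing
some `v ∉ {0, 1}` share exactly `{0, 1, v, v'}`, one of `v, v'` being an atom and the other a
coatom of both blocks, and an atom (coatom) of one block is an atom (coatom) of every block
containing it.

Loops obstruct joins. In a loop `i, j, k` with shared atoms `a ∈ i ∩ j`, `b ∈ j ∩ k`,
`c ∈ k ∩ i`, a join of `a` and `b` must be their join `d` in `j`; but `d ≤ c'` with `c' ∉ j`, so
`d` is shared with a second block, where it can be neither an atom nor a coatom. In a loop of
order 4 with shared atoms `a, b, c, e`, a join of `a` and `c` lies below `b'` and `e'`; being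
unable to be a shared coatom, it lies in a block through `a` and `c`, closing a loop of order 3.

Conversely, without loops, two elements of a common block have their block join as join, since an
upper bound outside the block closes a loop of order 3. Two incomparable elements `x, y` without
a common block have at most one upper bound other than `1`: each such bound is a coatom shared by
a block through `x` and a block through `y`, and two different ones close a loop of order 3 or 4.
-/

namespace PastedFamily

variable {K ι : Type*} {A : PastedFamily K ι} {i j k l m n : ι} {a b c p s u v w x y z : K}

section Basic

variable (A)

lemma blk_not_subset (i : ι) (a b c d : K) : ¬ A.blk i ⊆ {a, b, c, d} := fun h => by
  have hle := Set.ncard_le_ncard h (Set.toFinite _)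
  have h1 := Set.ncard_insert_le a {b, c, d}
  have h2 := Set.ncard_insert_le b {c, d}
  have h3 := Set.ncard_insert_le c {d}
  have h4 := A.card6 i
  rw [Set.ncard_singleton] at h3
  omega

lemma pair_subset_blk (i : ι) : {A.bot, A.top} ⊆ A.blk i :=
  Set.insert_subset (A.bot_mem i) (Set.singleton_subset_iff.2 (A.top_mem i))

lemma bot_ne_top : A.bot ≠ A.top := fun h => by
  obtain ⟨i, -⟩ := A.cover A.bot
  refine A.blk_not_subset i A.bot A.bot A.bot A.bot fun x hx => ?_
  have : x = A.bot := A.le_antisymm' i _ _ (h ▸ A.le_top i x hx) (A.bot_le i x hx)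
  simp [this]

lemma compl_injective : Function.Injective A.compl :=
  Function.Involutive.injective A.compl_invol

lemma compl_bot : A.compl A.bot = A.top := by
  obtain ⟨i, hi⟩ := A.cover (A.compl A.bot)
  have htop := A.compl_mem i _ (A.top_mem i)
  have h := A.compl_antitone i _ _ (A.bot_mem i) htop (A.bot_le i _ htop)
  rw [A.compl_invol] at h
  exact A.le_antisymm' i _ _ (A.le_top i _ hi) h

lemma compl_top : A.compl A.top = A.bot := by
  rw [← A.compl_bot, A.compl_invol]

lemma compl_eq_bot_iff : A.compl x = A.bot ↔ x = A.top := by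
  rw [← A.compl_top, A.compl_injective.eq_iff]

lemma compl_eq_top_iff : A.compl x = A.top ↔ x = A.bot := by
  rw [← A.compl_bot, A.compl_injective.eq_iff]

lemma compl_mem_pair_iff :
    A.compl x ∈ ({A.bot, A.top} : Set K) ↔ x ∈ ({A.bot, A.top} : Set K) := by
  simp only [Set.mem_insert_iff, Set.mem_singleton_iff, A.compl_eq_bot_iff, A.compl_eq_top_iff]
  exact or_comm

end Basic

section Block

lemma eq_bot_of_le_bot (hx : x ∈ A.blk i) (h : A.le i x A.bot) : x = A.bot :=
  A.le_antisymm' i _ _ h (A.bot_le i x hx)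

lemma eq_top_of_top_le (hx : x ∈ A.blk i) (h : A.le i A.top x) : x = A.top :=
  A.le_antisymm' i _ _ (A.le_top i x hx) h

lemma inf_eq_left_of_le (hx : x ∈ A.blk i) (hy : y ∈ A.blk i) (h : A.le i x y) :
    A.inf i x y = x :=
  A.le_antisymm' i _ _ (A.inf_le_left i x y hx hy)
    (A.le_inf i x y x hx hy hx (A.le_refl i x hx) h)

lemma sup_bot_left (hx : x ∈ A.blk i) : A.sup i A.bot x = x :=
  A.le_antisymm' i _ _
    (A.sup_le i _ x x (A.bot_mem i) hx hx (A.bot_le i x hx) (A.le_refl i x hx))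
    (A.le_sup_right i _ x (A.bot_mem i) hx)

lemma sup_bot_right (hx : x ∈ A.blk i) : A.sup i x A.bot = x :=
  A.le_antisymm' i _ _
    (A.sup_le i x _ x hx (A.bot_mem i) hx (A.le_refl i x hx) (A.bot_le i x hx))
    (A.le_sup_left i x _ hx (A.bot_mem i))

lemma le_of_le_sup_of_inf_eq_bot (hx : x ∈ A.blk i) (hy : y ∈ A.blk i) (hz : z ∈ A.blk i)
    (h : A.le i x (A.sup i y z)) (hxz : A.inf i x z = A.bot) : A.le i x y := by
  have hxy : A.inf i x y = x := by
    rw [← sup_bot_right (A.inf_mem i x y hx hy), ← hxz, ← A.distrib i x y z hx hy hz,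
      inf_eq_left_of_le hx (A.sup_mem i y z hy hz) h]
  exact hxy ▸ A.inf_le_right i x y hx hy

lemma compl_inf_le (hx : x ∈ A.blk i) (hy : y ∈ A.blk i) :
    A.le i (A.compl (A.inf i x y)) (A.sup i (A.compl x) (A.compl y)) := by
  have hx' := A.compl_mem i x hx
  have hy' := A.compl_mem i y hy
  have hs := A.sup_mem i _ _ hx' hy'
  have h : A.le i (A.compl (A.sup i (A.compl x) (A.compl y))) (A.inf i x y) := by
    refine A.le_inf i x y _ hx hy (A.compl_mem i _ hs) ?_ ?_
    · simpa only [A.compl_invol] using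
        A.compl_antitone i _ _ hx' hs (A.le_sup_left i _ _ hx' hy')
    · simpa only [A.compl_invol] using
        A.compl_antitone i _ _ hy' hs (A.le_sup_right i _ _ hx' hy')
  simpa only [A.compl_invol] using
    A.compl_antitone i _ _ (A.compl_mem i _ hs) (A.inf_mem i x y hx hy) h

end Block

section Atoms

variable (A) in
structure IsBlockAtom (i : ι) (a : K) : Prop where
  mem : a ∈ A.blk i
  ne_bot : a ≠ A.bot
  eq_of_le : ∀ z ∈ A.blk i, A.le i z a → z = A.bot ∨ z = a

variable (A) in
structure IsBlockCoatom (i : ι) (c : K) : Prop where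
  mem : c ∈ A.blk i
  ne_top : c ≠ A.top
  eq_of_le : ∀ z ∈ A.blk i, A.le i c z → z = A.top ∨ z = c

lemma IsBlockAtom.compl (ha : A.IsBlockAtom i a) : A.IsBlockCoatom i (A.compl a) where
  mem := A.compl_mem i a ha.mem
  ne_top h := ha.ne_bot (A.compl_eq_top_iff.1 h)
  eq_of_le z hz h := by
    have h' := A.compl_antitone i _ _ (A.compl_mem i a ha.mem) hz h
    rw [A.compl_invol] at h'
    rcases ha.eq_of_le _ (A.compl_mem i z hz) h' with h'' | h''
    · exact Or.inl (A.compl_eq_bot_iff.1 h'')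
    · exact Or.inr (by rw [← h'', A.compl_invol])

lemma IsBlockCoatom.compl (hc : A.IsBlockCoatom i c) : A.IsBlockAtom i (A.compl c) where
  mem := A.compl_mem i c hc.mem
  ne_bot h := hc.ne_top (A.compl_eq_bot_iff.1 h)
  eq_of_le z hz h := by
    have h' := A.compl_antitone i _ _ hz (A.compl_mem i c hc.mem) h
    rw [A.compl_invol] at h'
    rcases hc.eq_of_le _ (A.compl_mem i z hz) h' with h'' | h''
    · exact Or.inl (A.compl_eq_top_iff.1 h'')
    · exact Or.inr (by rw [← h'', A.compl_invol])

lemma IsBlockAtom.ne_top (ha : A.IsBlockAtom i a) : a ≠ A.top := by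
  rintro rfl
  refine A.blk_not_subset i A.bot A.top A.bot A.top fun z hz => ?_
  rcases ha.eq_of_le z hz (A.le_top i z hz) with rfl | rfl <;> simp

lemma IsBlockCoatom.ne_bot (hc : A.IsBlockCoatom i c) : c ≠ A.bot :=
  fun h => hc.compl.ne_top (A.compl_eq_top_iff.2 h)

lemma IsBlockAtom.not_mem_pair (ha : A.IsBlockAtom i a) : a ∉ ({A.bot, A.top} : Set K) := by
  simp [ha.ne_bot, ha.ne_top]

lemma IsBlockCoatom.not_mem_pair (hc : A.IsBlockCoatom i c) :
    c ∉ ({A.bot, A.top} : Set K) := by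
  simp [hc.ne_bot, hc.ne_top]

/-- Either `p ≤ p'`, and regularity gives `p ∧ p' ≤ z' ∨ z`, or `p ∧ p' = 0`, and regularity
gives `z ∧ z' ≤ p' ∨ p`, hence `z ∧ z' ≤ p'` as `p ∧ z = 0`, and `p ≤ (z ∧ z')' ≤ z' ∨ z`. -/
lemma IsBlockAtom.le_compl_sup (hp : A.IsBlockAtom i p) (hz : z ∈ A.blk i)
    (hpz : A.inf i p z = A.bot) : A.le i p (A.sup i (A.compl z) z) := by
  have hp' := A.compl_mem i p hp.mem
  have hz' := A.compl_mem i z hz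
  rcases hp.eq_of_le _ (A.inf_mem i p _ hp.mem hp') (A.inf_le_left i p _ hp.mem hp') with h | h
  · have hm := A.inf_mem i z _ hz hz'
    have hmp : A.inf i (A.inf i z (A.compl z)) p = A.bot := by
      refine eq_bot_of_le_bot (A.inf_mem i _ p hm hp.mem) (hpz ▸ ?_)
      exact A.le_inf i p z _ hp.mem hz (A.inf_mem i _ p hm hp.mem)
        (A.inf_le_right i _ p hm hp.mem)
        (A.le_trans' i _ _ _ (A.inf_le_left i _ p hm hp.mem) (A.inf_le_left i z _ hz hz'))
    have hreg := A.regular i z (A.compl p) hz hp'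
    rw [A.compl_invol] at hreg
    have hmp' := A.compl_antitone i _ _ hm hp'
      (le_of_le_sup_of_inf_eq_bot hm hp' hp.mem hreg hmp)
    rw [A.compl_invol] at hmp'
    simpa only [A.compl_invol] using A.le_trans' i _ _ _ hmp' (compl_inf_le hz hz')
  · have hreg := A.regular i p (A.compl z) hp.mem hz'
    rwa [A.compl_invol, h] at hreg

lemma IsBlockAtom.le_or_le_compl (hp : A.IsBlockAtom i p) (hz : z ∈ A.blk i) :
    A.le i p z ∨ A.le i p (A.compl z) := by
  rcases hp.eq_of_le _ (A.inf_mem i p z hp.mem hz) (A.inf_le_left i p z hp.mem hz) with h | h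
  · exact Or.inr <| le_of_le_sup_of_inf_eq_bot hp.mem (A.compl_mem i z hz) hz
      (hp.le_compl_sup hz h) h
  · exact Or.inl (h ▸ A.inf_le_right i p z hp.mem hz)

lemma IsBlockAtom.le_compl_of_ne (ha : A.IsBlockAtom i a) (hb : A.IsBlockAtom i b)
    (hab : a ≠ b) : A.le i a (A.compl b) := by
  refine (ha.le_or_le_compl hb.mem).resolve_left fun h => ?_
  rcases hb.eq_of_le a ha.mem h with h' | h'
  · exact ha.ne_bot h'
  · exact hab h'

lemma IsBlockAtom.not_isBlockCoatom (ha : A.IsBlockAtom i a) : ¬ A.IsBlockCoatom i a := by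
  intro hc
  refine A.blk_not_subset i A.bot A.top a (A.compl a) fun z hz => ?_
  rcases ha.le_or_le_compl hz with h | h
  · rcases hc.eq_of_le z hz h with rfl | rfl <;> simp
  · rcases hc.eq_of_le _ (A.compl_mem i z hz) h with h' | h'
    · simp [A.compl_eq_top_iff.1 h']
    · simp [← h', A.compl_invol]

lemma IsBlockAtom.compl_ne (ha : A.IsBlockAtom i a) : A.compl a ≠ a := by
  intro hfix
  refine A.blk_not_subset i A.bot A.top a (A.compl a) fun z hz => ?_
  rcases ha.le_or_le_compl hz with h | h
  · have h' := A.compl_antitone i _ _ ha.mem hz h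
    rw [hfix] at h'
    rcases ha.eq_of_le _ (A.compl_mem i z hz) h' with h'' | h''
    · simp [A.compl_eq_bot_iff.1 h'']
    · simp [← h'', A.compl_invol]
  · have h' := A.compl_antitone i _ _ ha.mem (A.compl_mem i z hz) h
    rw [hfix, A.compl_invol] at h'
    rcases ha.eq_of_le z hz h' with rfl | rfl <;> simp

lemma IsBlockCoatom.compl_ne (hc : A.IsBlockCoatom i c) : A.compl c ≠ c := fun h =>
  hc.compl.compl_ne (by rw [A.compl_invol, h])

lemma sup_ne_top_of_isBlockAtom (ha : A.IsBlockAtom i a) (hb : A.IsBlockAtom i b) :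
    A.sup i a b ≠ A.top := by
  intro h
  refine A.blk_not_subset i A.bot A.top a b fun z hz => ?_
  have hz_eq : z = A.sup i (A.inf i z a) (A.inf i z b) := by
    rw [← A.distrib i z a b hz ha.mem hb.mem, h,
      inf_eq_left_of_le hz (A.top_mem i) (A.le_top i z hz)]
  rcases ha.eq_of_le _ (A.inf_mem i z a hz ha.mem) (A.inf_le_right i z a hz ha.mem) with h1 | h1 <;>
    rcases hb.eq_of_le _ (A.inf_mem i z b hz hb.mem) (A.inf_le_right i z b hz hb.mem) with h2 | h2 <;>
    rw [h1, h2] at hz_eq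
  · simp [hz_eq, sup_bot_left (A.bot_mem i)]
  · simp [hz_eq, sup_bot_left hb.mem]
  · simp [hz_eq, sup_bot_right ha.mem]
  · simp [hz_eq, h]

end Atoms

section Sharing

lemma isBlockAtom_or_isBlockCoatom (hij : i ≠ j)
    (hx : x ∈ (A.blk i ∩ A.blk j) \ {A.bot, A.top}) :
    (A.IsBlockAtom i x ∧ A.IsBlockAtom j x) ∨ (A.IsBlockCoatom i x ∧ A.IsBlockCoatom j x) := by
  obtain ⟨⟨hxi, hxj⟩, hx01⟩ := hx
  have h0 : x ≠ A.bot := fun h => hx01 (Or.inl h)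
  have h1 : x ≠ A.top := fun h => hx01 (Or.inr h)
  rcases A.inter i j hij with h | ⟨-, -, -, -, -, htype⟩
  · exact absurd (h ▸ ⟨hxi, hxj⟩) hx01
  · rcases htype x ⟨hxi, hxj⟩ h0 h1 with ⟨⟨-, hi⟩, -, hj⟩ | ⟨⟨-, hi⟩, -, hj⟩
    · exact Or.inl ⟨⟨hxi, h0, hi⟩, hxj, h0, hj⟩
    · exact Or.inr ⟨⟨hxi, h1, hi⟩, hxj, h1, hj⟩

lemma IsBlockAtom.of_mem (ha : A.IsBlockAtom i a) (hj : a ∈ A.blk j) : A.IsBlockAtom j a := by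
  rcases eq_or_ne i j with rfl | hij
  · exact ha
  rcases isBlockAtom_or_isBlockCoatom hij ⟨⟨ha.mem, hj⟩, ha.not_mem_pair⟩ with h | h
  · exact h.2
  · exact absurd h.1 ha.not_isBlockCoatom

lemma IsBlockCoatom.of_mem (hc : A.IsBlockCoatom i c) (hj : c ∈ A.blk j) :
    A.IsBlockCoatom j c := by
  simpa only [A.compl_invol] using (hc.compl.of_mem (A.compl_mem j c hj)).compl

lemma isBlockCoatom_of_le_of_le (hmn : m ≠ n) (hxm : x ∈ A.blk m) (hzm : z ∈ A.blk m)
    (hxz : A.le m x z) (hyn : y ∈ A.blk n) (hzn : z ∈ A.blk n) (hyz : A.le n y z)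
    (hx0 : x ≠ A.bot) (hy0 : y ≠ A.bot) (hxy : x ≠ y) (hz : z ≠ A.top) :
    A.IsBlockCoatom m z := by
  have hz0 : z ≠ A.bot := by rintro rfl; exact hx0 (eq_bot_of_le_bot hxm hxz)
  rcases isBlockAtom_or_isBlockCoatom hmn ⟨⟨hzm, hzn⟩, by simp [hz0, hz]⟩ with
    ⟨hzm, hzn⟩ | ⟨hc, -⟩
  · rcases hzm.eq_of_le x hxm hxz with h | rfl
    · exact absurd h hx0
    rcases hzn.eq_of_le y hyn hyz with h | h
    · exact absurd h hy0
    · exact absurd h.symm hxy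
  · exact hc

lemma compl_ne_of_mem_inter (hij : i ≠ j) (hx : x ∈ (A.blk i ∩ A.blk j) \ {A.bot, A.top}) :
    A.compl x ≠ x := by
  rcases isBlockAtom_or_isBlockCoatom hij hx with ⟨h, -⟩ | ⟨h, -⟩
  · exact h.compl_ne
  · exact h.compl_ne

lemma ncard_eq_four (hx : x ∉ ({A.bot, A.top} : Set K)) (hxx : A.compl x ≠ x) :
    ({A.bot, A.top, x, A.compl x} : Set K).ncard = 4 := by
  have hx' := A.compl_mem_pair_iff.not.2 hx
  simp only [Set.mem_insert_iff, Set.mem_singleton_iff, not_or] at hx hx'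
  rw [Set.ncard_insert_of_notMem, Set.ncard_insert_of_notMem, Set.ncard_pair hxx.symm]
  · simp [Ne.symm hx.2, Ne.symm hx'.2]
  · simp [A.bot_ne_top, Ne.symm hx.1, Ne.symm hx'.1]

lemma inter_eq_of_mem (hij : i ≠ j) (hx : x ∈ (A.blk i ∩ A.blk j) \ {A.bot, A.top}) :
    A.blk i ∩ A.blk j = {A.bot, A.top, x, A.compl x} := by
  rcases A.inter i j hij with h | ⟨hcard, hbot, htop, hcompl, -, -⟩
  · exact absurd (h ▸ hx.1) hx.2
  refine (Set.eq_of_subset_of_ncard_le ?_ ?_ ((A.finite i).subset Set.inter_subset_left)).symm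
  · simp only [Set.insert_subset_iff, Set.singleton_subset_iff]
    exact ⟨hbot, htop, hx.1, hcompl x hx.1⟩
  · rw [ncard_eq_four hx.2 (compl_ne_of_mem_inter hij hx)]
    exact hcard

lemma ncard_inter_eq_four (hij : i ≠ j) (hx : x ∈ (A.blk i ∩ A.blk j) \ {A.bot, A.top}) :
    (A.blk i ∩ A.blk j).ncard = 4 := by
  rw [inter_eq_of_mem hij hx]
  exact ncard_eq_four hx.2 (compl_ne_of_mem_inter hij hx)

lemma ne_of_ncard_inter_eq_four (h : (A.blk i ∩ A.blk j).ncard = 4) : i ≠ j := by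
  rintro rfl
  have := A.card6 i
  rw [Set.inter_self] at h
  omega

lemma IsBlockAtom.eq_of_mem (hij : i ≠ j) (ha : A.IsBlockAtom i a) (hb : A.IsBlockAtom i b)
    (haj : a ∈ A.blk j) (hbj : b ∈ A.blk j) : b = a := by
  have hb' : b ∈ ({A.bot, A.top, a, A.compl a} : Set K) :=
    inter_eq_of_mem hij ⟨⟨ha.mem, haj⟩, ha.not_mem_pair⟩ ▸ ⟨hb.mem, hbj⟩
  simp only [Set.mem_insert_iff, Set.mem_singleton_iff] at hb'
  rcases hb' with h | h | h | h
  · exact absurd h hb.ne_bot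
  · exact absurd h hb.ne_top
  · exact h
  · exact absurd (h ▸ ha.compl) hb.not_isBlockCoatom

lemma IsBlockCoatom.eq_of_mem (hij : i ≠ j) (hc : A.IsBlockCoatom i c)
    (hd : A.IsBlockCoatom i w) (hcj : c ∈ A.blk j) (hdj : w ∈ A.blk j) : w = c :=
  A.compl_injective <|
    hc.compl.eq_of_mem hij hd.compl (A.compl_mem j c hcj) (A.compl_mem j w hdj)

lemma exists_isBlockAtom_of_ncard_inter_eq_four (h : (A.blk i ∩ A.blk j).ncard = 4) :
    ∃ a, A.IsBlockAtom i a ∧ A.IsBlockAtom j a := by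
  have hij := ne_of_ncard_inter_eq_four h
  obtain ⟨x, hx⟩ : ∃ x, x ∈ (A.blk i ∩ A.blk j) \ {A.bot, A.top} := by
    by_contra! hsub
    have := Set.ncard_le_ncard (fun x hx => by_contra fun h' => hsub x ⟨hx, h'⟩)
      (Set.toFinite ({A.bot, A.top} : Set K))
    rw [h, Set.ncard_pair A.bot_ne_top] at this
    omega
  rcases isBlockAtom_or_isBlockCoatom hij hx with ⟨hi, hj⟩ | ⟨hi, hj⟩
  · exact ⟨x, hi, hj⟩
  · exact ⟨A.compl x, hi.compl, hj.compl⟩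

lemma atomicLoop3_of_mem (hjk : j ≠ k) (hu : u ∈ (A.blk i ∩ A.blk j) \ {A.bot, A.top})
    (hv : v ∈ (A.blk j ∩ A.blk k) \ {A.bot, A.top}) (hvi : v ∉ A.blk i)
    (hw : w ∈ (A.blk k ∩ A.blk i) \ {A.bot, A.top}) : A.AtomicLoop3 i j k := by
  have hij : i ≠ j := by rintro rfl; exact hvi hv.1.1
  have hki : k ≠ i := by rintro rfl; exact hvi hv.1.2
  refine ⟨ncard_inter_eq_four hij hu, ncard_inter_eq_four hjk hv, ncard_inter_eq_four hki hw,
    Set.Subset.antisymm ?_ (Set.subset_inter (Set.subset_inter (A.pair_subset_blk i)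
      (A.pair_subset_blk j)) (A.pair_subset_blk k))⟩
  rintro t ⟨⟨hti, htj⟩, htk⟩
  have ht : t ∈ ({A.bot, A.top, v, A.compl v} : Set K) := inter_eq_of_mem hjk hv ▸ ⟨htj, htk⟩
  simp only [Set.mem_insert_iff, Set.mem_singleton_iff] at ht
  rcases ht with rfl | rfl | rfl | rfl
  · exact Or.inl rfl
  · exact Or.inr rfl
  · exact absurd hti hvi
  · exact absurd (A.compl_invol v ▸ A.compl_mem i _ hti) hvi

/-- The triple intersections are trivial because each triple contains a diagonal pair. -/
lemma atomicLoop4_of_mem (hu : u ∈ (A.blk i ∩ A.blk j) \ {A.bot, A.top})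
    (hv : v ∈ (A.blk j ∩ A.blk k) \ {A.bot, A.top})
    (hw : w ∈ (A.blk k ∩ A.blk l) \ {A.bot, A.top})
    (hx : x ∈ (A.blk l ∩ A.blk i) \ {A.bot, A.top})
    (hik : A.blk i ∩ A.blk k ⊆ {A.bot, A.top}) (hjl : A.blk j ∩ A.blk l ⊆ {A.bot, A.top}) :
    A.AtomicLoop4 i j k l := by
  have hij : i ≠ j := by rintro rfl; exact hx.2 (hjl ⟨hx.1.2, hx.1.1⟩)
  have hjk : j ≠ k := by rintro rfl; exact hu.2 (hik hu.1)
  have hkl : k ≠ l := by rintro rfl; exact hv.2 (hjl hv.1)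
  have hli : l ≠ i := by rintro rfl; exact hw.2 (hik ⟨hw.1.2, hw.1.1⟩)
  have h2 : ∀ m n, {A.bot, A.top} ⊆ A.blk m ∩ A.blk n := fun m n =>
    Set.subset_inter (A.pair_subset_blk m) (A.pair_subset_blk n)
  have h3 : ∀ m n o, {A.bot, A.top} ⊆ A.blk m ∩ A.blk n ∩ A.blk o := fun m n o =>
    Set.subset_inter (h2 m n) (A.pair_subset_blk o)
  exact ⟨ncard_inter_eq_four hij hu, ncard_inter_eq_four hjk hv, ncard_inter_eq_four hkl hw,
    ncard_inter_eq_four hli hx, hik.antisymm (h2 i k), hjl.antisymm (h2 j l),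
    Set.Subset.antisymm (fun _ h => hik ⟨h.1.1, h.2⟩) (h3 i j k),
    Set.Subset.antisymm (fun _ h => hjl ⟨h.1.2, h.2⟩) (h3 i j l),
    Set.Subset.antisymm (fun _ h => hik h.1) (h3 i k l),
    Set.Subset.antisymm (fun _ h => hjl ⟨h.1.1, h.2⟩) (h3 j k l)⟩

end Sharing

section Amalgam

variable (A) in
lemma gle_refl (x : K) : A.gle x x := by
  obtain ⟨i, hi⟩ := A.cover x
  exact ⟨i, hi, hi, A.le_refl i x hi⟩

variable (A) in
lemma gle_top (x : K) : A.gle x A.top := by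
  obtain ⟨i, hi⟩ := A.cover x
  exact ⟨i, hi, A.top_mem i, A.le_top i x hi⟩

variable (A) in
lemma bot_gle (x : K) : A.gle A.bot x := by
  obtain ⟨i, hi⟩ := A.cover x
  exact ⟨i, A.bot_mem i, hi, A.bot_le i x hi⟩

lemma le_of_gle (hx : x ∈ A.blk i) (hy : y ∈ A.blk i) (h : A.gle x y) : A.le i x y :=
  let ⟨j, hxj, hyj, h⟩ := h
  A.le_compat j i x y hxj hyj hx hy h

lemma gle_antisymm (hxy : A.gle x y) (hyx : A.gle y x) : x = y :=
  let ⟨i, hxi, hyi, h⟩ := hxy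
  A.le_antisymm' i x y h (le_of_gle hyi hxi hyx)

lemma eq_top_of_top_gle (h : A.gle A.top x) : x = A.top :=
  gle_antisymm (A.gle_top x) h

lemma gle_compl (h : A.gle x y) : A.gle (A.compl y) (A.compl x) :=
  let ⟨i, hx, hy, h⟩ := h
  ⟨i, A.compl_mem i y hy, A.compl_mem i x hx, A.compl_antitone i x y hx hy h⟩

lemma IsBlockAtom.eq_of_gle (ha : A.IsBlockAtom i a) (h : A.gle z a) : z = A.bot ∨ z = a :=
  let ⟨_, hz, haj, h⟩ := h
  (ha.of_mem haj).eq_of_le z hz h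

lemma IsBlockCoatom.eq_of_gle (hc : A.IsBlockCoatom i c) (h : A.gle c z) : z = A.top ∨ z = c :=
  let ⟨_, hcj, hz, h⟩ := h
  (hc.of_mem hcj).eq_of_le z hz h

lemma not_mem_pair_of_not_gle (hxy : ¬ A.gle x y) (hyx : ¬ A.gle y x) :
    x ∉ ({A.bot, A.top} : Set K) := by
  rintro (rfl | rfl)
  · exact hxy (A.bot_gle y)
  · exact hyx (A.gle_top y)

variable (A) in
lemma paraOM : A.ParaOM := by
  intro x y ⟨i, hx, hy, hxy⟩ hlow
  have hx' := A.compl_mem i x hx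
  have hm := A.inf_mem i _ y hx' hy
  exact A.blockParaOM i x y hx hy hxy <| hlow _ ⟨i, hm, hx', A.inf_le_left i _ y hx' hy⟩
    ⟨i, hm, hy, A.inf_le_right i _ y hx' hy⟩

lemma isGlbA_compl_of_isLubA (h : A.IsLubA (A.compl x) (A.compl y) s) :
    A.IsGlbA x y (A.compl s) := by
  obtain ⟨hxs, hys, hlub⟩ := h
  refine ⟨A.compl_invol x ▸ gle_compl hxs, A.compl_invol y ▸ gle_compl hys, fun z hzx hzy => ?_⟩
  simpa only [A.compl_invol] using gle_compl (hlub _ (gle_compl hzx) (gle_compl hzy))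

end Amalgam

section Loops

lemma isLubA_eq_sup_of_isBlockAtom (ha : A.IsBlockAtom j a) (hb : A.IsBlockAtom j b)
    (hab : a ≠ b) (hs : A.IsLubA a b s) : s = A.sup j a b := by
  obtain ⟨has, hbs, hlub⟩ := hs
  have hd := A.sup_mem j a b ha.mem hb.mem
  have hsd : A.gle s (A.sup j a b) :=
    hlub _ ⟨j, ha.mem, hd, A.le_sup_left j a b ha.mem hb.mem⟩
      ⟨j, hb.mem, hd, A.le_sup_right j a b ha.mem hb.mem⟩
  obtain ⟨p, hap, hsp, hasp⟩ := has
  obtain ⟨q, hbq, hsq, hbsq⟩ := hbs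
  by_cases hpq : p = q
  · subst hpq
    obtain rfl : j = p := by
      by_contra hjp
      exact hab (ha.eq_of_mem hjp hb hap hbq).symm
    exact A.le_antisymm' j s _ (le_of_gle hsp hd hsd) (A.sup_le j a b s hap hbq hsp hasp hbsq)
  have hsc := isBlockCoatom_of_le_of_le hpq hap hsp hasp hbq hsq hbsq ha.ne_bot hb.ne_bot hab
    fun h => sup_ne_top_of_isBlockAtom ha hb (eq_top_of_top_gle (h ▸ hsd))
  rcases hsc.eq_of_gle hsd with h | h
  · exact absurd h (sup_ne_top_of_isBlockAtom ha hb)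
  · exact h.symm

lemma mem_of_sup_gle (ha : A.IsBlockAtom j a) (hb : A.IsBlockAtom j b) (hab : a ≠ b)
    (h : A.gle (A.sup j a b) w) (hw : w ≠ A.top) : w ∈ A.blk j := by
  obtain ⟨l, hdl, hwl, hle⟩ := h
  by_contra hwj
  have hjl : j ≠ l := by rintro rfl; exact hwj hwl
  have hd := A.sup_mem j a b ha.mem hb.mem
  have had := A.le_sup_left j a b ha.mem hb.mem
  have hd' : A.sup j a b ∉ ({A.bot, A.top} : Set K) := by
    rintro (h | h)
    · exact ha.ne_bot (eq_bot_of_le_bot ha.mem (h ▸ had))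
    · exact sup_ne_top_of_isBlockAtom ha hb h
  rcases isBlockAtom_or_isBlockCoatom hjl ⟨⟨hd, hdl⟩, hd'⟩ with ⟨hda, -⟩ | ⟨-, hdc⟩
  · have hbd := A.le_sup_right j a b ha.mem hb.mem
    rcases hda.eq_of_le a ha.mem had with h | h
    · exact ha.ne_bot h
    rcases hda.eq_of_le b hb.mem hbd with h' | h'
    · exact hb.ne_bot h'
    · exact hab (h.trans h'.symm)
  · rcases hdc.eq_of_le w hwl hle with h | h
    · exact hw h
    · exact hwj (h ▸ hd)

lemma not_atomicLoop3 (hsup : ∀ x y : K, ∃ s, A.IsLubA x y s) : ¬ A.AtomicLoop3 i j k := by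
  rintro ⟨hij, hjk, hki, hT⟩
  obtain ⟨a, hai, haj⟩ := exists_isBlockAtom_of_ncard_inter_eq_four hij
  obtain ⟨b, hbj, hbk⟩ := exists_isBlockAtom_of_ncard_inter_eq_four hjk
  obtain ⟨c, hck, hci⟩ := exists_isBlockAtom_of_ncard_inter_eq_four hki
  have hak : a ∉ A.blk k := fun h => hai.not_mem_pair (hT.subset ⟨⟨hai.mem, haj.mem⟩, h⟩)
  have hbi : b ∉ A.blk i := fun h => hbj.not_mem_pair (hT.subset ⟨⟨h, hbj.mem⟩, hbk.mem⟩)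
  have hcj : A.compl c ∉ A.blk j := fun h => hci.not_mem_pair
    (hT.subset ⟨⟨hci.mem, A.compl_invol c ▸ A.compl_mem j _ h⟩, hck.mem⟩)
  have hab : a ≠ b := by rintro rfl; exact hak hbk.mem
  have hac : a ≠ c := by rintro rfl; exact hak hck.mem
  have hbc : b ≠ c := by rintro rfl; exact hbi hci.mem
  obtain ⟨s, hs⟩ := hsup a b
  have hsc : A.gle s (A.compl c) := hs.2.2 _
    ⟨i, hai.mem, A.compl_mem i c hci.mem, hai.le_compl_of_ne hci hac⟩
    ⟨k, hbk.mem, A.compl_mem k c hck.mem, hbk.le_compl_of_ne hck hbc⟩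
  rw [isLubA_eq_sup_of_isBlockAtom haj hbj hab hs] at hsc
  exact hcj (mem_of_sup_gle haj hbj hab hsc hci.compl.ne_top)

lemma exists_common_blk_of_gle_coatoms (ha0 : a ≠ A.bot) (hc0 : c ≠ A.bot) (hac : a ≠ c)
    (has : A.gle a s) (hcs : A.gle c s) (hu : A.IsBlockCoatom i u) (hw : A.IsBlockCoatom j w)
    (huw : u ≠ w) (hsu : A.gle s u) (hsw : A.gle s w) : ∃ p, a ∈ A.blk p ∧ c ∈ A.blk p := by
  obtain ⟨p, hap, hsp, hasp⟩ := has
  obtain ⟨q, hcq, hsq, hcsq⟩ := hcs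
  by_cases hpq : p = q
  · exact ⟨p, hap, hpq ▸ hcq⟩
  have hsc := isBlockCoatom_of_le_of_le hpq hap hsp hasp hcq hsq hcsq ha0 hc0 hac
    fun h => hu.ne_top (eq_top_of_top_gle (h ▸ hsu))
  rcases hsc.eq_of_gle hsu with h | hus
  · exact absurd h hu.ne_top
  rcases hsc.eq_of_gle hsw with h | hws
  · exact absurd h hw.ne_top
  · exact absurd (hus.trans hws.symm) huw

lemma not_atomicLoop4 (hsup : ∀ x y : K, ∃ s, A.IsLubA x y s)
    (h3 : ¬ ∃ i j k : ι, A.AtomicLoop3 i j k) : ¬ A.AtomicLoop4 i j k l := by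
  rintro ⟨hij, hjk, hkl, hli, hik, hjl, -, -, -, -⟩
  obtain ⟨a, hai, haj⟩ := exists_isBlockAtom_of_ncard_inter_eq_four hij
  obtain ⟨b, hbj, hbk⟩ := exists_isBlockAtom_of_ncard_inter_eq_four hjk
  obtain ⟨c, hck, hcl⟩ := exists_isBlockAtom_of_ncard_inter_eq_four hkl
  obtain ⟨e, hel, hei⟩ := exists_isBlockAtom_of_ncard_inter_eq_four hli
  have hak : a ∉ A.blk k := fun h => hai.not_mem_pair (hik.subset ⟨hai.mem, h⟩)
  have hci : c ∉ A.blk i := fun h => hck.not_mem_pair (hik.subset ⟨h, hck.mem⟩)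
  have hcj : c ∉ A.blk j := fun h => hcl.not_mem_pair (hjl.subset ⟨h, hcl.mem⟩)
  have hej : e ∉ A.blk j := fun h => hel.not_mem_pair (hjl.subset ⟨h, hel.mem⟩)
  have hab : a ≠ b := by rintro rfl; exact hak hbk.mem
  have hac : a ≠ c := by rintro rfl; exact hci hai.mem
  have hae : a ≠ e := by rintro rfl; exact hej haj.mem
  have hcb : c ≠ b := by rintro rfl; exact hcj hbj.mem
  have hce : c ≠ e := by rintro rfl; exact hci hei.mem
  have hbe : b ≠ e := by rintro rfl; exact hej hbj.mem
  obtain ⟨s, has, hcs, hlub⟩ := hsup a c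
  obtain ⟨p, hap, hcp⟩ := exists_common_blk_of_gle_coatoms hai.ne_bot hck.ne_bot hac has hcs
    hbj.compl hei.compl (fun h => hbe (A.compl_injective h))
    (hlub _ ⟨j, haj.mem, A.compl_mem j b hbj.mem, haj.le_compl_of_ne hbj hab⟩
      ⟨k, hck.mem, A.compl_mem k b hbk.mem, hck.le_compl_of_ne hbk hcb⟩)
    (hlub _ ⟨i, hai.mem, A.compl_mem i e hei.mem, hai.le_compl_of_ne hei hae⟩
      ⟨l, hcl.mem, A.compl_mem l e hel.mem, hcl.le_compl_of_ne hel hce⟩)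
  have hjp : j ≠ p := by rintro rfl; exact hcj hcp
  have hbp : b ∉ A.blk p := fun h => hab (haj.eq_of_mem hjp hbj hap h).symm
  exact h3 ⟨p, j, k, atomicLoop3_of_mem (ne_of_ncard_inter_eq_four hjk)
    ⟨⟨hap, haj.mem⟩, hai.not_mem_pair⟩ ⟨⟨hbj.mem, hbk.mem⟩, hbj.not_mem_pair⟩ hbp
    ⟨⟨hck.mem, hcp⟩, hck.not_mem_pair⟩⟩

end Loops

section Joins

lemma isBlockAtom_of_le_of_not_mem (hx : x ∈ A.blk i) (hxj : x ∈ A.blk j) (hzj : z ∈ A.blk j)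
    (hxz : A.le j x z) (hzi : z ∉ A.blk i) (hz : z ≠ A.top) (hx0 : x ≠ A.bot) :
    A.IsBlockAtom i x := by
  have hij : i ≠ j := by rintro rfl; exact hzi hzj
  have hxt : x ≠ A.top := by rintro rfl; exact hz (eq_top_of_top_le hzj hxz)
  rcases isBlockAtom_or_isBlockCoatom hij ⟨⟨hx, hxj⟩, by simp [hx0, hxt]⟩ with ⟨ha, -⟩ | ⟨-, hc⟩
  · exact ha
  · rcases hc.eq_of_le z hzj hxz with h | h
    · exact absurd h hz
    · exact absurd (h ▸ hx) hzi

lemma isLubA_sup_of_mem (h3 : ¬ ∃ i j k : ι, A.AtomicLoop3 i j k) (hx : x ∈ A.blk i)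
    (hy : y ∈ A.blk i) (hx0 : x ≠ A.bot) (hy0 : y ≠ A.bot) (hxy : x ≠ y) :
    A.IsLubA x y (A.sup i x y) := by
  have hd := A.sup_mem i x y hx hy
  refine ⟨⟨i, hx, hd, A.le_sup_left i x y hx hy⟩, ⟨i, hy, hd, A.le_sup_right i x y hx hy⟩,
    fun z hxz hyz => ?_⟩
  by_cases hzi : z ∈ A.blk i
  · exact ⟨i, hd, hzi, A.sup_le i x y z hx hy hzi (le_of_gle hx hzi hxz) (le_of_gle hy hzi hyz)⟩
  by_cases hzt : z = A.top
  · exact hzt ▸ A.gle_top _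
  -- an upper bound outside `i` closes a loop of order 3 through `x` and `y`
  obtain ⟨m, hxm, hzm, hxzm⟩ := hxz
  obtain ⟨n, hyn, hzn, hyzn⟩ := hyz
  have hxa := isBlockAtom_of_le_of_not_mem hx hxm hzm hxzm hzi hzt hx0
  have hya := isBlockAtom_of_le_of_not_mem hy hyn hzn hyzn hzi hzt hy0
  have hym : y ∉ A.blk m := fun h =>
    hxy (hxa.eq_of_mem (by rintro rfl; exact hzi hzm) hya hxm h).symm
  have hni : n ≠ i := by rintro rfl; exact hzi hzn
  have hz : z ∉ ({A.bot, A.top} : Set K) := by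
    rintro (rfl | rfl)
    · exact hx0 (eq_bot_of_le_bot hxm hxzm)
    · exact hzt rfl
  exact (h3 ⟨m, n, i, atomicLoop3_of_mem hni ⟨⟨hzm, hzn⟩, hz⟩
    ⟨⟨hyn, hy⟩, hya.not_mem_pair⟩ hym ⟨⟨hx, hxm⟩, hxa.not_mem_pair⟩⟩).elim

lemma exists_isBlockCoatom_of_upper_bound (hxy : ¬ A.gle x y) (hyx : ¬ A.gle y x)
    (hcommon : ∀ i, x ∈ A.blk i → y ∉ A.blk i)
    (hxz : A.gle x z) (hyz : A.gle y z) (hz : z ≠ A.top) :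
    ∃ m n, m ≠ n ∧ x ∈ A.blk m ∧ y ∈ A.blk n ∧ z ∈ A.blk n ∧ A.IsBlockCoatom m z := by
  obtain ⟨m, hxm, hzm, hxzm⟩ := hxz
  obtain ⟨n, hyn, hzn, hyzn⟩ := hyz
  have hmn : m ≠ n := by rintro rfl; exact hcommon m hxm hyn
  refine ⟨m, n, hmn, hxm, hyn, hzn, isBlockCoatom_of_le_of_le hmn hxm hzm hxzm hyn hzn hyzn
    ?_ ?_ ?_ hz⟩
  · rintro rfl; exact hxy (A.bot_gle y)
  · rintro rfl; exact hyx (A.bot_gle x)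
  · rintro rfl; exact hxy (A.gle_refl x)

lemma subsingleton_upper_bounds (h3 : ¬ ∃ i j k : ι, A.AtomicLoop3 i j k)
    (h4 : ¬ ∃ i j k l : ι, A.AtomicLoop4 i j k l) (hxy : ¬ A.gle x y) (hyx : ¬ A.gle y x)
    (hcommon : ∀ i, x ∈ A.blk i → y ∉ A.blk i) :
    {z | A.gle x z ∧ A.gle y z ∧ z ≠ A.top}.Subsingleton := by
  rintro z₁ ⟨hxz₁, hyz₁, hz₁⟩ z₂ ⟨hxz₂, hyz₂, hz₂⟩
  obtain ⟨m₁, n₁, hmn₁, hxm₁, hyn₁, hzn₁, hc₁⟩ :=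
    exists_isBlockCoatom_of_upper_bound hxy hyx hcommon hxz₁ hyz₁ hz₁
  obtain ⟨m₂, n₂, -, hxm₂, hyn₂, hzn₂, hc₂⟩ :=
    exists_isBlockCoatom_of_upper_bound hxy hyx hcommon hxz₂ hyz₂ hz₂
  have hx := not_mem_pair_of_not_gle hxy hyx
  have hy := not_mem_pair_of_not_gle hyx hxy
  by_cases hn : n₁ = n₂
  · subst hn
    by_cases hm : m₁ = m₂
    · subst hm
      exact (hc₁.eq_of_mem hmn₁ hc₂ hzn₁ hzn₂).symm
    exact (h3 ⟨n₁, m₁, m₂, atomicLoop3_of_mem hm ⟨⟨hzn₁, hc₁.mem⟩, hc₁.not_mem_pair⟩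
      ⟨⟨hxm₁, hxm₂⟩, hx⟩ (fun h => hcommon n₁ h hyn₁)
      ⟨⟨hc₂.mem, hzn₂⟩, hc₂.not_mem_pair⟩⟩).elim
  by_cases h₁ : A.blk n₂ ∩ A.blk m₁ ⊆ {A.bot, A.top}
  · by_cases h₂ : A.blk m₂ ∩ A.blk n₁ ⊆ {A.bot, A.top}
    · exact (h4 ⟨m₂, n₂, n₁, m₁, atomicLoop4_of_mem ⟨⟨hc₂.mem, hzn₂⟩, hc₂.not_mem_pair⟩
        ⟨⟨hyn₂, hyn₁⟩, hy⟩ ⟨⟨hzn₁, hc₁.mem⟩, hc₁.not_mem_pair⟩ ⟨⟨hxm₁, hxm₂⟩, hx⟩ h₂ h₁⟩).elim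
    obtain ⟨w, hw, hw'⟩ := Set.not_subset.1 h₂
    exact (h3 ⟨m₂, n₁, n₂, atomicLoop3_of_mem hn ⟨hw, hw'⟩ ⟨⟨hyn₁, hyn₂⟩, hy⟩
      (hcommon m₂ hxm₂) ⟨⟨hzn₂, hc₂.mem⟩, hc₂.not_mem_pair⟩⟩).elim
  obtain ⟨w, hw, hw'⟩ := Set.not_subset.1 h₁
  exact (h3 ⟨m₁, n₁, n₂, atomicLoop3_of_mem hn ⟨⟨hc₁.mem, hzn₁⟩, hc₁.not_mem_pair⟩
    ⟨⟨hyn₁, hyn₂⟩, hy⟩ (hcommon m₁ hxm₁) ⟨hw, hw'⟩⟩).elim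

lemma exists_isLubA_of_subsingleton (h : {z | A.gle x z ∧ A.gle y z ∧ z ≠ A.top}.Subsingleton) :
    ∃ s, A.IsLubA x y s := by
  by_cases hc : ∃ c, A.gle x c ∧ A.gle y c ∧ c ≠ A.top
  · obtain ⟨c, hc⟩ := hc
    refine ⟨c, hc.1, hc.2.1, fun z hxz hyz => ?_⟩
    by_cases hz : z = A.top
    · exact hz ▸ A.gle_top c
    · exact h hc ⟨hxz, hyz, hz⟩ ▸ A.gle_refl c
  · refine ⟨A.top, A.gle_top x, A.gle_top y, fun z hxz hyz => ?_⟩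
    obtain rfl : z = A.top := by
      by_contra hz
      exact hc ⟨z, hxz, hyz, hz⟩
    exact A.gle_refl _

lemma exists_isLubA (h3 : ¬ ∃ i j k : ι, A.AtomicLoop3 i j k)
    (h4 : ¬ ∃ i j k l : ι, A.AtomicLoop4 i j k l) (x y : K) : ∃ s, A.IsLubA x y s := by
  by_cases hxy : A.gle x y
  · exact ⟨y, hxy, A.gle_refl y, fun _ _ h => h⟩
  by_cases hyx : A.gle y x
  · exact ⟨x, A.gle_refl x, hyx, fun _ h _ => h⟩
  by_cases hcommon : ∀ i, x ∈ A.blk i → y ∉ A.blk i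
  · exact exists_isLubA_of_subsingleton (subsingleton_upper_bounds h3 h4 hxy hyx hcommon)
  obtain ⟨i, hx, hy⟩ : ∃ i, x ∈ A.blk i ∧ y ∈ A.blk i := by simpa using hcommon
  refine ⟨_, isLubA_sup_of_mem h3 hx hy ?_ ?_ ?_⟩
  · rintro rfl; exact hxy (A.bot_gle y)
  · rintro rfl; exact hyx (A.bot_gle x)
  · rintro rfl; exact hxy (A.gle_refl x)

end Joins

end PastedFamily

/-- An atomic amalgam of Kleene lattices is a paraorthomodular lattice
(lattice-ordered and paraorthomodular) iff it contains no atomic loop of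
order 3 or 4. -/
theorem stmt_14 {K ι : Type*} (A : PastedFamily K ι) :
    ((∀ x y : K, ∃ s, A.IsLubA x y s) ∧ (∀ x y : K, ∃ m, A.IsGlbA x y m) ∧
      A.ParaOM) ↔
    ((¬ ∃ i j k : ι, A.AtomicLoop3 i j k) ∧
     ¬ ∃ i j k l : ι, A.AtomicLoop4 i j k l) := by
  constructor
  · rintro ⟨hsup, -, -⟩
    have h3 : ¬ ∃ i j k : ι, A.AtomicLoop3 i j k := fun ⟨_, _, _, h⟩ =>
      PastedFamily.not_atomicLoop3 hsup h
    exact ⟨h3, fun ⟨_, _, _, _, h⟩ => PastedFamily.not_atomicLoop4 hsup h3 h⟩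
  · rintro ⟨h3, h4⟩
    refine ⟨A.exists_isLubA h3 h4, fun x y => ?_, A.paraOM⟩
    obtain ⟨s, hs⟩ := A.exists_isLubA h3 h4 (A.compl x) (A.compl y)
    exact ⟨A.compl s, PastedFamily.isGlbA_compl_of_isLubA hs⟩
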